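/- arXiv:2601.02817 — 3 statements merged into one kernel-verified Lean document; each statement's English description precedes it below -/
import Mathlib

section
/- Let θ ∈ [0, π/2) and let S, T ∈ Π_θ^{Ber,P} relative to K with ST = TS. Then ber(ST) ≤ (1 + sin²θ) · ber(S) · ber(T). -/
open scoped InnerProductSpace
open ContinuousLinearMap

noncomputable section

variable {H : Type*} [NormedAddCommGroup H] [InnerProductSpace ℂ H] [CompleteSpace H]

/-- The Berezin number of `A` relative to a set `K` of unit vectors:
`ber(A) = sup_{x ∈ K} |⟨A x, x⟩|` (with the paper's inner product `⟨A x, x⟩ = ⟪x, A x⟫_ℂ`). -/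
def berNum (K : Set H) (A : H →L[ℂ] H) : ℝ :=
  ⨆ x : K, ‖⟪(x : H), A x⟫_ℂ‖

/-- The Berezin norm of `A` relative to `K`: `‖A‖_ber = sup_{x, y ∈ K} |⟨A x, y⟩|`. -/
def berNorm (K : Set H) (A : H →L[ℂ] H) : ℝ :=
  ⨆ x : K, ⨆ y : K, ‖⟪(y : H), A (x : H)⟫_ℂ‖

/-- The real part `Re(A) = (A + A*)/2` of an operator. -/
def reOp (A : H →L[ℂ] H) : H →L[ℂ] H := (2 : ℂ)⁻¹ • (A + adjoint A)

/-- The imaginary part `Im(A) = (A - A*)/(2i)` of an operator. -/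
def imOp (A : H →L[ℂ] H) : H →L[ℂ] H := (2 * Complex.I)⁻¹ • (A - adjoint A)

/-- `A` is Berezin sectorial with semi-angle `θ` relative to `K`:
every Berezin symbol value `⟨A x, x⟩`, `x ∈ K`, lies in the sector `S_θ`. -/
def BerSectorial (K : Set H) (θ : ℝ) (A : H →L[ℂ] H) : Prop :=
  ∀ x ∈ K, 0 ≤ (⟪x, A x⟫_ℂ).re ∧ |(⟪x, A x⟫_ℂ).im| ≤ Real.tan θ * (⟪x, A x⟫_ℂ).re

/-- `A ∈ Π_θ^{Ber,P}`: Berezin sectorial and both `Re(A)` and `Im(A)` satisfy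
the Berezin number power inequality. -/
def BerSectorialP (K : Set H) (θ : ℝ) (A : H →L[ℂ] H) : Prop :=
  BerSectorial K θ A ∧
    ∀ n : ℕ, 0 < n →
      berNum K (reOp A ^ n) ≤ berNum K (reOp A) ^ n ∧
      berNum K (imOp A ^ n) ≤ berNum K (imOp A) ^ n

section AUX
lemma sector_im_le' {θ : ℝ} (h0 : 0 ≤ θ) (h1 : θ < Real.pi / 2) {z : ℂ}
    (him : |z.im| ≤ Real.tan θ * z.re) :
    |z.im| ≤ Real.sin θ * ‖z‖ := by
  have hcos : 0 < Real.cos θ := Real.cos_pos_of_mem_Ioo ⟨by linarith [Real.pi_pos], h1⟩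
  have hsin : 0 ≤ Real.sin θ := Real.sin_nonneg_of_nonneg_of_le_pi h0 (by linarith [Real.pi_pos])
  have h2 : |z.im| * Real.cos θ ≤ Real.sin θ * z.re := by
    rw [Real.tan_eq_sin_div_cos] at him
    calc |z.im| * Real.cos θ ≤ (Real.sin θ / Real.cos θ * z.re) * Real.cos θ :=
          mul_le_mul_of_nonneg_right him hcos.le
      _ = Real.sin θ * z.re := by field_simp
  have habs : (‖z‖) ^ 2 = z.re ^ 2 + z.im ^ 2 := by
    rw [Complex.sq_norm, Complex.normSq_apply]; ring
  have hpyth := Real.sin_sq_add_cos_sq θ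
  have h3 : (|z.im| * Real.cos θ) ^ 2 ≤ (Real.sin θ * z.re) ^ 2 := by
    have := mul_self_le_mul_self (by positivity) h2
    simpa [pow_two] using this
  have hsq : z.im ^ 2 ≤ (Real.sin θ * ‖z‖) ^ 2 := by
    nlinarith [sq_abs z.im]
  calc |z.im| = Real.sqrt (z.im ^ 2) := (Real.sqrt_sq_eq_abs _).symm
    _ ≤ Real.sqrt ((Real.sin θ * ‖z‖) ^ 2) := Real.sqrt_le_sqrt hsq
    _ = Real.sin θ * ‖z‖ := Real.sqrt_sq (by positivity)

lemma reOp_symbol (S : H →L[ℂ] H) (x : H) : ⟪x, reOp S x⟫_ℂ = ((⟪x, S x⟫_ℂ).re : ℂ) := by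
  have h : ⟪x, adjoint S x⟫_ℂ = (starRingEnd ℂ) ⟪x, S x⟫_ℂ := by
    rw [adjoint_inner_right, ← inner_conj_symm]
  simp only [reOp, ContinuousLinearMap.smul_apply, ContinuousLinearMap.add_apply,
    inner_smul_right, inner_add_right, h, Complex.add_conj]
  push_cast; ring

lemma imOp_symbol (S : H →L[ℂ] H) (x : H) : ⟪x, imOp S x⟫_ℂ = ((⟪x, S x⟫_ℂ).im : ℂ) := by
  have h : ⟪x, adjoint S x⟫_ℂ = (starRingEnd ℂ) ⟪x, S x⟫_ℂ := by
    rw [adjoint_inner_right, ← inner_conj_symm]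
  simp only [imOp, ContinuousLinearMap.smul_apply, ContinuousLinearMap.sub_apply,
    inner_smul_right, inner_sub_right, h, Complex.sub_conj]
  have hI : Complex.I ≠ 0 := Complex.I_ne_zero
  field_simp
  push_cast; ring

lemma reOp_swap (S : H →L[ℂ] H) (x y : H) : ⟪x, reOp S y⟫_ℂ = ⟪reOp S x, y⟫_ℂ := by
  simp [reOp, inner_add_right, inner_add_left, inner_smul_right, inner_smul_left,
    adjoint_inner_right, adjoint_inner_left, Complex.conj_ofNat]
  ring

lemma imOp_swap (S : H →L[ℂ] H) (x y : H) : ⟪x, imOp S y⟫_ℂ = ⟪imOp S x, y⟫_ℂ := by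
  simp [imOp, inner_sub_right, inner_sub_left, inner_smul_right, inner_smul_left,
    adjoint_inner_right, adjoint_inner_left, map_inv₀, Complex.conj_ofNat]
  ring

lemma decomp_add (S : H →L[ℂ] H) (x : H) : reOp S x + Complex.I • imOp S x = S x := by
  simp only [reOp, imOp, ContinuousLinearMap.smul_apply, ContinuousLinearMap.add_apply,
    ContinuousLinearMap.sub_apply]
  match_scalars <;> (field_simp; try ring)

lemma decomp_sub (S : H →L[ℂ] H) (x : H) : reOp S x - Complex.I • imOp S x = adjoint S x := by
  simp only [reOp, imOp, ContinuousLinearMap.smul_apply, ContinuousLinearMap.add_apply,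
    ContinuousLinearMap.sub_apply]
  match_scalars <;> (field_simp; try ring)

lemma berNum_bdd (K : Set H) (hKunit : ∀ x ∈ K, ‖x‖ = 1) (A : H →L[ℂ] H) :
    BddAbove (Set.range fun x : K => ‖⟪(x : H), A x⟫_ℂ‖) := by
  refine ⟨‖A‖, ?_⟩
  rintro _ ⟨x, rfl⟩
  calc ‖⟪(x : H), A x⟫_ℂ‖ ≤ ‖(x : H)‖ * ‖A (x : H)‖ := by
        exact norm_inner_le_norm _ _
    _ ≤ ‖(x : H)‖ * (‖A‖ * ‖(x : H)‖) :=
        mul_le_mul_of_nonneg_left (A.le_opNorm _) (norm_nonneg _)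
    _ = ‖A‖ := by rw [hKunit x x.2]; ring

lemma le_berNum (K : Set H) (hKunit : ∀ x ∈ K, ‖x‖ = 1) (A : H →L[ℂ] H) (x : K) :
    ‖⟪(x : H), A x⟫_ℂ‖ ≤ berNum K A :=
  le_ciSup (berNum_bdd K hKunit A) x

lemma berNum_nonneg (K : Set H) (hK : K.Nonempty) (hKunit : ∀ x ∈ K, ‖x‖ = 1)
    (A : H →L[ℂ] H) : 0 ≤ berNum K A := by
  obtain ⟨x, hx⟩ := hK
  exact le_trans (norm_nonneg _) (le_berNum K hKunit A ⟨x, hx⟩)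

omit [CompleteSpace H] in
lemma berNum_le (K : Set H) (hK : K.Nonempty) {A : H →L[ℂ] H} {M : ℝ}
    (h : ∀ x ∈ K, ‖⟪(x : H), A x⟫_ℂ‖ ≤ M) : berNum K A ≤ M := by
  have := hK.to_subtype
  exact ciSup_le fun x => h x x.2

/-- `‖B x‖² ≤ ber(B²)` for symmetric `B` and unit `x ∈ K`. -/
lemma normsq_le_berNum_sq (K : Set H) (hKunit : ∀ x ∈ K, ‖x‖ = 1) (B : H →L[ℂ] H)
    (hswap : ∀ x y : H, ⟪x, B y⟫_ℂ = ⟪B x, y⟫_ℂ) {x : H} (hx : x ∈ K) :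
    ‖B x‖ ^ 2 ≤ berNum K (B ^ 2) := by
  have h1 : ⟪x, (B ^ 2) x⟫_ℂ = ((‖B x‖ : ℂ)) ^ 2 := by
    rw [pow_two, ContinuousLinearMap.mul_apply, hswap, inner_self_eq_norm_sq_to_K]
    norm_cast
  have h2 := le_berNum K hKunit (B ^ 2) ⟨x, hx⟩
  rw [h1] at h2
  simpa using h2

/-- The key pointwise bound: `‖S x‖² + ‖S* x‖² = 2(‖Re S x‖² + ‖Im S x‖²)`. -/
lemma norm_sq_add_adjoint (S : H →L[ℂ] H) (x : H) :
    ‖S x‖ ^ 2 + ‖adjoint S x‖ ^ 2 = 2 * (‖reOp S x‖ ^ 2 + ‖imOp S x‖ ^ 2) := by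
  have hpar := parallelogram_law_with_norm ℂ (reOp S x) (Complex.I • imOp S x)
  rw [decomp_add, decomp_sub] at hpar
  have hnb : ‖Complex.I • imOp S x‖ = ‖imOp S x‖ := by
    rw [norm_smul, Complex.norm_I, one_mul]
  rw [hnb] at hpar
  nlinarith [hpar]
end AUX

/-- If `S, T ∈ Π_θ^{Ber,P}` with `θ ∈ [0, π/2)` and `ST = TS`, then
`ber(ST) ≤ (1 + sin²θ) ber(S) ber(T)`. -/
theorem berezin_sectorialP_commuting_product_bound
    (K : Set H) (hK : K.Nonempty) (hKunit : ∀ x ∈ K, ‖x‖ = 1)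
    (θ : ℝ) (hθ : θ ∈ Set.Ico 0 (Real.pi / 2))
    (S T : H →L[ℂ] H) (hS : BerSectorialP K θ S) (hT : BerSectorialP K θ T)
    (hcomm : S * T = T * S) :
    berNum K (S * T) ≤ (1 + Real.sin θ ^ 2) * berNum K S * berNum K T := by
  obtain ⟨hθ0, hθ1⟩ := hθ
  have hsin : 0 ≤ Real.sin θ :=
    Real.sin_nonneg_of_nonneg_of_le_pi hθ0 (by linarith [Real.pi_pos])
  have hSnn := berNum_nonneg K hK hKunit S
  have hTnn := berNum_nonneg K hK hKunit T
  -- ber(Re A) ≤ ber A  and  ber(Im A) ≤ sin θ * ber A   for A ∈ {S, T}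
  have hre_le : ∀ A : H →L[ℂ] H, berNum K (reOp A) ≤ berNum K A := by
    intro A
    refine berNum_le K hK fun x hx => ?_
    rw [reOp_symbol, Complex.norm_real, Real.norm_eq_abs]
    exact le_trans (Complex.abs_re_le_norm _) (le_berNum K hKunit A ⟨x, hx⟩)
  have him_le : ∀ A : H →L[ℂ] H, BerSectorial K θ A →
      berNum K (imOp A) ≤ Real.sin θ * berNum K A := by
    intro A hsec
    refine berNum_le K hK fun x hx => ?_
    rw [imOp_symbol, Complex.norm_real, Real.norm_eq_abs]
    calc |(⟪x, A x⟫_ℂ).im| ≤ Real.sin θ * ‖⟪x, A x⟫_ℂ‖ :=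
          sector_im_le' hθ0 hθ1 (hsec x hx).2
      _ ≤ Real.sin θ * berNum K A :=
          mul_le_mul_of_nonneg_left (le_berNum K hKunit A ⟨x, hx⟩) hsin
  -- pointwise: ‖A x‖² + ‖A* x‖² ≤ 2 (1 + sin²θ) (ber A)²  for A ∈ {S, T}
  have hkey : ∀ A : H →L[ℂ] H, BerSectorialP K θ A → ∀ x ∈ K,
      ‖A x‖ ^ 2 + ‖adjoint A x‖ ^ 2 ≤ 2 * ((1 + Real.sin θ ^ 2) * berNum K A ^ 2) := by
    intro A hA x hx
    have hre_nn := berNum_nonneg K hK hKunit (reOp A)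
    have him_nn := berNum_nonneg K hK hKunit (imOp A)
    have h1 : ‖reOp A x‖ ^ 2 ≤ berNum K A ^ 2 := by
      calc ‖reOp A x‖ ^ 2 ≤ berNum K (reOp A ^ 2) :=
            normsq_le_berNum_sq K hKunit (reOp A) (reOp_swap A) hx
        _ ≤ berNum K (reOp A) ^ 2 := (hA.2 2 (by norm_num)).1
        _ ≤ berNum K A ^ 2 := pow_le_pow_left₀ hre_nn (hre_le A) 2
    have h2 : ‖imOp A x‖ ^ 2 ≤ (Real.sin θ * berNum K A) ^ 2 := by
      calc ‖imOp A x‖ ^ 2 ≤ berNum K (imOp A ^ 2) :=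
            normsq_le_berNum_sq K hKunit (imOp A) (imOp_swap A) hx
        _ ≤ berNum K (imOp A) ^ 2 := (hA.2 2 (by norm_num)).2
        _ ≤ (Real.sin θ * berNum K A) ^ 2 := pow_le_pow_left₀ him_nn (him_le A hA.1) 2
    rw [norm_sq_add_adjoint]
    nlinarith [h1, h2]
  -- final pointwise bound and conclusion
  refine berNum_le K hK fun x hx => ?_
  set M : ℝ := (1 + Real.sin θ ^ 2) * berNum K S * berNum K T with hM
  have hMnn : 0 ≤ M := by positivity
  have e1 : ⟪(x : H), (S * T) x⟫_ℂ = ⟪adjoint S x, T x⟫_ℂ := by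
    rw [ContinuousLinearMap.mul_apply, adjoint_inner_left]
  have e2 : ⟪(x : H), (S * T) x⟫_ℂ = ⟪adjoint T x, S x⟫_ℂ := by
    rw [hcomm, ContinuousLinearMap.mul_apply, adjoint_inner_left]
  have b1 : ‖⟪(x : H), (S * T) x⟫_ℂ‖ ≤ ‖adjoint S x‖ * ‖T x‖ := by
    rw [e1]; exact norm_inner_le_norm _ _
  have b2 : ‖⟪(x : H), (S * T) x⟫_ℂ‖ ≤ ‖adjoint T x‖ * ‖S x‖ := by
    rw [e2]; exact norm_inner_le_norm _ _
  have habs_nn : 0 ≤ ‖⟪(x : H), (S * T) x⟫_ℂ‖ := norm_nonneg _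
  have hS' := hkey S hS x hx
  have hT' := hkey T hT x hx
  have hsq : (‖⟪(x : H), (S * T) x⟫_ℂ‖) ^ 2 ≤ M ^ 2 := by
    have hmul : (‖⟪(x : H), (S * T) x⟫_ℂ‖) ^ 2 ≤
        (‖adjoint S x‖ * ‖T x‖) * (‖adjoint T x‖ * ‖S x‖) := by
      rw [pow_two]
      exact mul_le_mul b1 b2 habs_nn (by positivity)
    have r1 : ‖S x‖ * ‖adjoint S x‖ ≤ (1 + Real.sin θ ^ 2) * berNum K S ^ 2 := by
      nlinarith [hS', sq_nonneg (‖S x‖ - ‖adjoint S x‖)]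
    have r2 : ‖T x‖ * ‖adjoint T x‖ ≤ (1 + Real.sin θ ^ 2) * berNum K T ^ 2 := by
      nlinarith [hT', sq_nonneg (‖T x‖ - ‖adjoint T x‖)]
    have q1 : ‖adjoint S x‖ * ‖T x‖ * (‖adjoint T x‖ * ‖S x‖) =
        (‖S x‖ * ‖adjoint S x‖) * (‖T x‖ * ‖adjoint T x‖) := by ring
    have q2 : (‖S x‖ * ‖adjoint S x‖) * (‖T x‖ * ‖adjoint T x‖) ≤
        ((1 + Real.sin θ ^ 2) * berNum K S ^ 2) * ((1 + Real.sin θ ^ 2) * berNum K T ^ 2) :=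
      mul_le_mul r1 r2 (by positivity) (by positivity)
    have q3 : ((1 + Real.sin θ ^ 2) * berNum K S ^ 2) * ((1 + Real.sin θ ^ 2) * berNum K T ^ 2)
        = M ^ 2 := by rw [hM]; ring
    calc (‖⟪(x : H), (S * T) x⟫_ℂ‖) ^ 2
        ≤ ‖adjoint S x‖ * ‖T x‖ * (‖adjoint T x‖ * ‖S x‖) := hmul
      _ = (‖S x‖ * ‖adjoint S x‖) * (‖T x‖ * ‖adjoint T x‖) := q1
      _ ≤ _ := q2
      _ = M ^ 2 := q3
  calc ‖⟪(x : H), (S * T) x⟫_ℂ‖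
      = Real.sqrt ((‖⟪(x : H), (S * T) x⟫_ℂ‖) ^ 2) := (Real.sqrt_sq habs_nn).symm
    _ ≤ Real.sqrt (M ^ 2) := Real.sqrt_le_sqrt hsq
    _ = M := Real.sqrt_sq hMnn
end
end

section
/- Let ρ ∈ (0, 1) and define f : (0, 1) → ℝ by f(r) = (1 − r²)·ρ·r / (1 − ρ·r²)². Then sup_{r ∈ (0,1)} f(r) = r₁(ρ), where r₁(ρ) = ( (3 − √(9ρ² − 14ρ + 9) − ρ) · √(6ρ + 2√(9ρ² − 14ρ + 9) − 6) ) / ( √ρ · (3ρ + √(9ρ² − 14ρ + 9) − 5)² ), and this supremum is attained at some point of (0, 1). -/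
set_option maxHeartbeats 1000000 in
/-- For `ρ ∈ (0, 1)` and `f(r) = (1 − r²)ρr/(1 − ρr²)²` on `(0, 1)`, the
supremum of `f` over `(0, 1)` equals
`r₁(ρ) = ((3 − √(9ρ² − 14ρ + 9) − ρ)√(6ρ + 2√(9ρ² − 14ρ + 9) − 6))
          / (√ρ (3ρ + √(9ρ² − 14ρ + 9) − 5)²)`,
and it is attained at some point of `(0, 1)`. -/
theorem sup_berezin_symbol_comp_diff
    (ρ : ℝ) (hρ : ρ ∈ Set.Ioo (0 : ℝ) 1)
    (f : ℝ → ℝ) (hf : ∀ r, f r = (1 - r ^ 2) * ρ * r / (1 - ρ * r ^ 2) ^ 2) :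
    IsGreatest (f '' Set.Ioo (0 : ℝ) 1)
      (((3 - Real.sqrt (9 * ρ ^ 2 - 14 * ρ + 9) - ρ) *
          Real.sqrt (6 * ρ + 2 * Real.sqrt (9 * ρ ^ 2 - 14 * ρ + 9) - 6)) /
        (Real.sqrt ρ * (3 * ρ + Real.sqrt (9 * ρ ^ 2 - 14 * ρ + 9) - 5) ^ 2)) := by
  obtain ⟨he0, he1⟩ := hρ
  set D : ℝ := Real.sqrt (9 * ρ ^ 2 - 14 * ρ + 9) with hDdef
  have hdisc : (0 : ℝ) < 9 * ρ ^ 2 - 14 * ρ + 9 := by nlinarith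
  have hD2 : D ^ 2 = 9 * ρ ^ 2 - 14 * ρ + 9 := Real.sq_sqrt hdisc.le
  have hDpos : 0 < D := Real.sqrt_pos.mpr hdisc
  have hDgt : 3 - 3 * ρ < D := by
    nlinarith [hD2, hDpos, sq_nonneg (D - (3 - 3 * ρ))]
  have hDlt : D < 3 - ρ := by
    nlinarith [hD2, hDpos, sq_nonneg (D + (3 - ρ))]
  set x : ℝ := (3 * ρ + D - 3) / (2 * ρ) with hxdef
  have hρne : (2 : ℝ) * ρ ≠ 0 := by positivity
  have hx0 : 0 < x := by
    apply div_pos; linarith; positivity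
  have hx1 : x < 1 := by
    rw [hxdef, div_lt_one (by positivity)]; linarith
  have hxeq : ρ * x ^ 2 + 3 * (1 - ρ) * x - 1 = 0 := by
    rw [hxdef]; field_simp; nlinarith [hD2]
  set s : ℝ := Real.sqrt x with hsdef
  have hs2 : s ^ 2 = x := Real.sq_sqrt hx0.le
  have hs0 : 0 < s := Real.sqrt_pos.mpr hx0
  have hs1 : s < 1 := by
    rw [hsdef]; rw [show (1:ℝ) = Real.sqrt 1 by simp]
    exact Real.sqrt_lt_sqrt hx0.le (by simpa using hx1)
  have hK : 1 - 3 * (1 - ρ) * s ^ 2 - ρ * s ^ 4 = 0 := by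
    have : s ^ 4 = x ^ 2 := by rw [← hs2]; ring
    rw [this, hs2]; linarith [hxeq]
  -- the value of f at s
  have hden : 0 < 1 - ρ * s ^ 2 := by
    rw [hs2, hxdef]
    have : ρ * ((3 * ρ + D - 3) / (2 * ρ)) = (3 * ρ + D - 3) / 2 := by
      field_simp
    rw [this]; rw [sub_pos, div_lt_one (by norm_num)]; linarith
  -- √(6ρ + 2D − 6) = 2 √ρ s
  have hsq : Real.sqrt (6 * ρ + 2 * D - 6) = 2 * Real.sqrt ρ * s := by
    have h1 : 6 * ρ + 2 * D - 6 = (2 * Real.sqrt ρ * s) ^ 2 := by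
      have : (2 * Real.sqrt ρ * s) ^ 2 = 4 * ρ * s ^ 2 := by
        rw [mul_pow, mul_pow, Real.sq_sqrt he0.le]; ring
      rw [this, hs2, hxdef]; field_simp; ring
    rw [h1, Real.sqrt_sq (by positivity)]
  have hsρ : Real.sqrt ρ ≠ 0 := by positivity
  have h1s : 1 - s ^ 2 = (3 - ρ - D) / (2 * ρ) := by
    rw [hs2, hxdef]; field_simp; ring
  have h1ρs : 1 - ρ * s ^ 2 = (5 - 3 * ρ - D) / 2 := by
    rw [hs2, hxdef]; field_simp; ring
  clear_value D x s
  have h5ne : (5 : ℝ) - 3 * ρ - D ≠ 0 := by nlinarith [hden]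
  have h2ρ : ρ ≠ 0 := he0.ne'
  have hvalue : f s = ((3 - D - ρ) * Real.sqrt (6 * ρ + 2 * D - 6)) /
      (Real.sqrt ρ * (3 * ρ + D - 5) ^ 2) := by
    have h35 : (3 * ρ + D - 5) ≠ 0 := by intro h; apply h5ne; linarith
    have hA : f s = 2 * s * (3 - ρ - D) / (5 - 3 * ρ - D) ^ 2 := by
      rw [hf, h1s, h1ρs]; field_simp
    have hB : ((3 - D - ρ) * Real.sqrt (6 * ρ + 2 * D - 6)) /
        (Real.sqrt ρ * (3 * ρ + D - 5) ^ 2)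
        = 2 * s * (3 - ρ - D) / (5 - 3 * ρ - D) ^ 2 := by
      rw [hsq, show (3 * ρ + D - 5) ^ 2 = (5 - 3 * ρ - D) ^ 2 from by ring]
      field_simp; ring
    rw [hA, hB]
  constructor
  · exact ⟨s, ⟨hs0, hs1⟩, hvalue⟩
  · rintro y ⟨r, ⟨hr0, hr1⟩, rfl⟩
    rw [← hvalue, hf, hf]
    have hdenr : 0 < 1 - ρ * r ^ 2 := by nlinarith
    rw [div_le_div_iff₀ (by positivity) (by positivity)]
    -- certificate: s(1−s²)(1−ρr²)² − r(1−r²)(1−ρs²)² = (r−s)²·Q(r) using hK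
    have hident : s * (1 - s ^ 2) * (1 - ρ * r ^ 2) ^ 2
        - r * (1 - r ^ 2) * (1 - ρ * s ^ 2) ^ 2
        = (r - s) ^ 2 * (ρ ^ 2 * s * (1 - s ^ 2) * r ^ 2
            + ((1 - ρ * s ^ 2) ^ 2 + 2 * ρ ^ 2 * s ^ 2 * (1 - s ^ 2)) * r
            + s * (2 * (1 - ρ * s ^ 2) ^ 2 - 2 * ρ * (1 - s ^ 2)
                + 3 * ρ ^ 2 * s ^ 2 * (1 - s ^ 2))) := by
      linear_combination ((1 - ρ * s ^ 2) * (s - r)) * hK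
    have hh : 0 ≤ 2 * (1 - ρ * s ^ 2) ^ 2 - 2 * ρ * (1 - s ^ 2)
        + 3 * ρ ^ 2 * s ^ 2 * (1 - s ^ 2) := by
      have hrw : 2 * (1 - ρ * s ^ 2) ^ 2 - 2 * ρ * (1 - s ^ 2)
          + 3 * ρ ^ 2 * s ^ 2 * (1 - s ^ 2)
          = 2 * (1 - ρ) ^ 2 + ρ * (1 - s ^ 2) * (2 - 2 * ρ + ρ * s ^ 2) := by ring
      rw [hrw]
      have h1 : (0:ℝ) ≤ ρ * (1 - s ^ 2) * (2 - 2 * ρ + ρ * s ^ 2) := by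
        apply mul_nonneg; apply mul_nonneg he0.le; nlinarith; nlinarith
      nlinarith [sq_nonneg (1 - ρ)]
    have hQ : 0 ≤ ρ ^ 2 * s * (1 - s ^ 2) * r ^ 2
        + ((1 - ρ * s ^ 2) ^ 2 + 2 * ρ ^ 2 * s ^ 2 * (1 - s ^ 2)) * r
        + s * (2 * (1 - ρ * s ^ 2) ^ 2 - 2 * ρ * (1 - s ^ 2)
            + 3 * ρ ^ 2 * s ^ 2 * (1 - s ^ 2)) := by
      have h1 : (0:ℝ) ≤ ρ ^ 2 * s * (1 - s ^ 2) * r ^ 2 := by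
        apply mul_nonneg; apply mul_nonneg; apply mul_nonneg
        · positivity
        · exact hs0.le
        · nlinarith
        · positivity
      have h2 : (0:ℝ) ≤ ((1 - ρ * s ^ 2) ^ 2 + 2 * ρ ^ 2 * s ^ 2 * (1 - s ^ 2)) * r := by
        apply mul_nonneg _ hr0.le
        have : (0:ℝ) ≤ 2 * ρ ^ 2 * s ^ 2 * (1 - s ^ 2) := by
          apply mul_nonneg (by positivity); nlinarith
        nlinarith [sq_nonneg (1 - ρ * s ^ 2)]
      have h3 : (0:ℝ) ≤ s * (2 * (1 - ρ * s ^ 2) ^ 2 - 2 * ρ * (1 - s ^ 2)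
          + 3 * ρ ^ 2 * s ^ 2 * (1 - s ^ 2)) := mul_nonneg hs0.le hh
      linarith
    have hP : 0 ≤ s * (1 - s ^ 2) * (1 - ρ * r ^ 2) ^ 2
        - r * (1 - r ^ 2) * (1 - ρ * s ^ 2) ^ 2 := by
      rw [hident]; exact mul_nonneg (sq_nonneg _) hQ
    linarith [mul_nonneg he0.le hP]
end

section
/- Let ρ ∈ (0, 1) and set N = ⌊(1 + ρ²)/(1 − ρ²)⌋ (the greatest integer not exceeding (1 + ρ²)/(1 − ρ²); note N ≥ 1). Then for every integer n ≥ 1: n(n + 1)·ρ^{2n−1} ≤ N(N + 1)·ρ^{2N−1}; equivalently, sup_{n ≥ 1} √(n(n+1))·ρ^{n − 1/2} = √(N(N+1))·ρ^{N − 1/2}. -/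
section Aux

variable (ρ : ℝ)

private noncomputable def fA (n : ℕ) : ℝ := (n : ℝ) * ((n : ℝ) + 1) * ρ ^ (2 * n - 1)

private lemma fA_succ (m : ℕ) :
    fA ρ (m + 2) = ((m : ℝ) + 2) * ((m : ℝ) + 3) * (ρ ^ (2 * m + 1) * ρ ^ 2) := by
  have h1 : 2 * (m + 2) - 1 = (2 * m + 1) + 2 := by omega
  simp only [fA, h1, pow_add]
  push_cast
  ring

private lemma fA_at (m : ℕ) :
    fA ρ (m + 1) = ((m : ℝ) + 1) * ((m : ℝ) + 2) * ρ ^ (2 * m + 1) := by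
  have h1 : 2 * (m + 1) - 1 = 2 * m + 1 := by omega
  simp only [fA, h1]
  push_cast
  ring

private lemma claimA (hρ1 : 0 < ρ) (hρ2 : ρ < 1) (n : ℕ) (h1 : 1 ≤ n)
    (h2 : ((n : ℝ) + 1) * (1 - ρ ^ 2) ≤ 1 + ρ ^ 2) :
    fA ρ n ≤ fA ρ (n + 1) := by
  obtain ⟨m, rfl⟩ := Nat.exists_eq_add_of_le' h1
  show fA ρ (m + 1) ≤ fA ρ (m + 2)
  rw [fA_succ ρ m, fA_at ρ m]
  have hp : (0:ℝ) < ρ ^ (2 * m + 1) := pow_pos hρ1 _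
  push_cast at h2
  have h3 : (m:ℝ) + 1 ≤ ((m:ℝ) + 3) * ρ ^ 2 := by nlinarith
  have h4 := mul_le_mul_of_nonneg_left h3
    (mul_nonneg (by positivity : (0:ℝ) ≤ (m:ℝ) + 2) hp.le)
  nlinarith [h4]

private lemma claimB (hρ1 : 0 < ρ) (hρ2 : ρ < 1) (n : ℕ) (h1 : 1 ≤ n)
    (h2 : 1 + ρ ^ 2 ≤ ((n : ℝ) + 1) * (1 - ρ ^ 2)) :
    fA ρ (n + 1) ≤ fA ρ n := by
  obtain ⟨m, rfl⟩ := Nat.exists_eq_add_of_le' h1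
  show fA ρ (m + 2) ≤ fA ρ (m + 1)
  rw [fA_succ ρ m, fA_at ρ m]
  have hp : (0:ℝ) < ρ ^ (2 * m + 1) := pow_pos hρ1 _
  push_cast at h2
  have h3 : ((m:ℝ) + 3) * ρ ^ 2 ≤ (m:ℝ) + 1 := by nlinarith
  have h4 := mul_le_mul_of_nonneg_left h3
    (mul_nonneg (by positivity : (0:ℝ) ≤ (m:ℝ) + 2) hp.le)
  nlinarith [h4]

end Aux

/-- For `ρ ∈ (0, 1)` and `N = ⌊(1 + ρ²)/(1 − ρ²)⌋`, one has
`n(n + 1)ρ^{2n−1} ≤ N(N + 1)ρ^{2N−1}` for every integer `n ≥ 1`; equivalently,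
`sup_{n ≥ 1} √(n(n+1)) ρ^{n − 1/2} = √(N(N+1)) ρ^{N − 1/2}`. -/
theorem sup_aluthge_weights_comp_diff
    (ρ : ℝ) (hρ : ρ ∈ Set.Ioo (0 : ℝ) 1)
    (N : ℕ) (hN : N = ⌊(1 + ρ ^ 2) / (1 - ρ ^ 2)⌋₊) :
    (∀ n : ℕ, 1 ≤ n →
      (n : ℝ) * ((n : ℝ) + 1) * ρ ^ (2 * n - 1) ≤
        (N : ℝ) * ((N : ℝ) + 1) * ρ ^ (2 * N - 1)) ∧
    (⨆ n : {m : ℕ // 1 ≤ m},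
        Real.sqrt ((n.1 : ℝ) * ((n.1 : ℝ) + 1)) * ρ ^ ((n.1 : ℝ) - 1 / 2))
      = Real.sqrt ((N : ℝ) * ((N : ℝ) + 1)) * ρ ^ ((N : ℝ) - 1 / 2) := by
  obtain ⟨hρ1, hρ2⟩ := hρ
  have hden : (0:ℝ) < 1 - ρ ^ 2 := by nlinarith
  set c : ℝ := (1 + ρ ^ 2) / (1 - ρ ^ 2) with hc
  have hc1 : 1 ≤ c := by
    rw [le_div_iff₀ hden]; nlinarith
  have hN1 : 1 ≤ N := by
    rw [hN]; exact Nat.le_floor (by simpa using hc1)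
  have hNc : (N : ℝ) ≤ c := by
    rw [hN]; exact Nat.floor_le (by linarith)
  have hcN : c < (N : ℝ) + 1 := by
    rw [hN]; exact Nat.lt_floor_add_one c
  -- claim A specialized: n+1 ≤ N → step up
  have stepA : ∀ n : ℕ, 1 ≤ n → n + 1 ≤ N → fA ρ n ≤ fA ρ (n + 1) := by
    intro n h1 h2
    apply claimA ρ hρ1 hρ2 n h1
    have : ((n:ℝ) + 1) ≤ c := le_trans (by exact_mod_cast Nat.cast_le.mpr h2) hNc
    calc ((n : ℝ) + 1) * (1 - ρ ^ 2) ≤ c * (1 - ρ ^ 2) :=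
          mul_le_mul_of_nonneg_right this hden.le
      _ = 1 + ρ ^ 2 := by rw [hc, div_mul_cancel₀ _ hden.ne']
  have stepB : ∀ n : ℕ, N ≤ n → fA ρ (n + 1) ≤ fA ρ n := by
    intro n h2
    apply claimB ρ hρ1 hρ2 n (le_trans hN1 h2)
    have hle : (N : ℝ) ≤ (n : ℝ) := by exact_mod_cast h2
    have : c ≤ (n : ℝ) + 1 := by linarith
    calc 1 + ρ ^ 2 = c * (1 - ρ ^ 2) := by rw [hc, div_mul_cancel₀ _ hden.ne']
      _ ≤ ((n : ℝ) + 1) * (1 - ρ ^ 2) := mul_le_mul_of_nonneg_right this hden.le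
  -- main inequality
  have up : ∀ d n : ℕ, 1 ≤ n → n + d = N → fA ρ n ≤ fA ρ N := by
    intro d
    induction d with
    | zero => intro n h1 h2; simp at h2; rw [h2]
    | succ d ih =>
      intro n h1 h2
      exact le_trans (stepA n h1 (by omega)) (ih (n+1) (by omega) (by omega))
  have down : ∀ d : ℕ, fA ρ (N + d) ≤ fA ρ N := by
    intro d
    induction d with
    | zero => simp
    | succ d ih =>
      exact le_trans (stepB (N + d) (by omega)) ih
  have main : ∀ n : ℕ, 1 ≤ n → fA ρ n ≤ fA ρ N := by
    intro n h1
    rcases le_or_gt n N with h | h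
    · exact up (N - n) n h1 (by omega)
    · have := down (n - N); rwa [show N + (n - N) = n by omega] at this
  refine ⟨main, ?_⟩
  -- rewrite terms as sqrt (fA ρ n)
  have key : ∀ n : ℕ, 1 ≤ n →
      Real.sqrt ((n : ℝ) * ((n : ℝ) + 1)) * ρ ^ ((n : ℝ) - 1 / 2)
        = Real.sqrt (fA ρ n) := by
    intro n h1
    have h2 : ρ ^ ((n : ℝ) - 1 / 2) = Real.sqrt (ρ ^ (2 * n - 1)) := by
      have hcast : (((2 * n - 1 : ℕ) : ℝ)) = 2 * (n : ℝ) - 1 := by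
        have : (1:ℕ) ≤ 2 * n := by omega
        push_cast [this]; ring
      rw [Real.sqrt_eq_rpow, ← Real.rpow_natCast ρ (2 * n - 1),
        ← Real.rpow_mul hρ1.le, hcast]
      ring_nf
    rw [h2, fA, ← Real.sqrt_mul (by positivity : (0:ℝ) ≤ (n:ℝ) * ((n:ℝ) + 1))]
  have hbdd : BddAbove (Set.range fun n : {m : ℕ // 1 ≤ m} =>
      Real.sqrt ((n.1 : ℝ) * ((n.1 : ℝ) + 1)) * ρ ^ ((n.1 : ℝ) - 1 / 2)) := by
    refine ⟨Real.sqrt (fA ρ N), ?_⟩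
    rintro x ⟨n, rfl⟩
    exact le_trans (le_of_eq (key n.1 n.2)) (Real.sqrt_le_sqrt (main n.1 n.2))
  have hval : Real.sqrt ((N : ℝ) * ((N : ℝ) + 1)) * ρ ^ ((N : ℝ) - 1 / 2)
      = Real.sqrt (fA ρ N) := key N hN1
  rw [hval]
  apply le_antisymm
  · exact ciSup_le fun n =>
      le_trans (le_of_eq (key n.1 n.2)) (Real.sqrt_le_sqrt (main n.1 n.2))
  · have := le_ciSup hbdd (⟨N, hN1⟩ : {m : ℕ // 1 ≤ m})
    rwa [key N hN1] at this
end
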